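/- arXiv:1305.0355 — 4 statements merged into one kernel-verified Lean document; each statement's English description precedes it below -/
import Mathlib

section
/- Let X ∈ ℝ^{n×p} be a deterministic design matrix with empirical covariance Σ̂ = (XᵀX)/n, let θ0 ∈ ℝ^p have support S of size s0, and let ξ > 0. If κ̂(s0,1) > 0, then any minimizer θ̂ZN(ξ) of the zero-noise Lasso objective θ ↦ (1/2)⟨θ−θ0, Σ̂(θ−θ0)⟩ + ξ‖θ‖₁ satisfies ‖θ̂ZN(ξ)‖₀ ≤ (1 + 4‖Σ̂‖₂/κ̂(s0,1))·s0, where ‖·‖₀ counts nonzero entries and ‖Σ̂‖₂ is the operator norm. -/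
open Matrix Finset MeasureTheory ProbabilityTheory
noncomputable section

/-- The ℓ¹ norm of a vector. -/
def l1n {p : ℕ} (v : Fin p → ℝ) : ℝ := ∑ i, |v i|

/-- The number of nonzero entries of a vector (its "ℓ⁰ norm"). -/
def l0n {p : ℕ} (v : Fin p → ℝ) : ℕ := (Finset.univ.filter fun i => v i ≠ 0).card

/-- The support of a vector, as a `Finset`. -/
def suppv {p : ℕ} (v : Fin p → ℝ) : Finset (Fin p) := Finset.univ.filter fun i => v i ≠ 0

/-- The entrywise sign vector. -/
def sgnv {p : ℕ} (v : Fin p → ℝ) : Fin p → ℝ := fun i => Real.sign (v i)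

/-- The zero-noise Lasso objective
`θ ↦ (1/2)⟨θ−θ0, Σ(θ−θ0)⟩ + ξ‖θ‖₁`. -/
def znObj {p : ℕ} (S : Matrix (Fin p) (Fin p) ℝ) (th0 : Fin p → ℝ) (xi : ℝ)
    (th : Fin p → ℝ) : ℝ :=
  (1/2) * ((th - th0) ⬝ᵥ (S *ᵥ (th - th0))) + xi * l1n th

/-- The Lasso objective `θ ↦ (1/(2n))‖Y − Xθ‖₂² + λ‖θ‖₁`. -/
def lassoObj {n p : ℕ} (X : Matrix (Fin n) (Fin p) ℝ) (Y : Fin n → ℝ) (lam : ℝ)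
    (th : Fin p → ℝ) : ℝ :=
  (1/(2*(n:ℝ))) * (∑ i, (Y i - (X *ᵥ th) i)^2) + lam * l1n th

/-- The submatrix `A_{T,T'}` with rows in `T` and columns in `T'`. -/
def subM {p : ℕ} (A : Matrix (Fin p) (Fin p) ℝ) (T T' : Finset (Fin p)) : Matrix ↥T ↥T' ℝ :=
  A.submatrix Subtype.val Subtype.val

/-- The restriction `v_T` of a vector to coordinates in `T`. -/
def restrv {p : ℕ} (v : Fin p → ℝ) (T : Finset (Fin p)) : ↥T → ℝ := fun i => v i

/-- Extension of a vector indexed by `T` to a vector indexed by `Fin p`, by zero. -/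
def extendT {p : ℕ} (T : Finset (Fin p)) (g : ↥T → ℝ) : Fin p → ℝ :=
  fun i => if h : i ∈ T then g ⟨i, h⟩ else 0

/-!
Write `u = θ̂ − θ0` and `S = supp θ0`. Comparing the objective at `θ̂` with its value at `θ0` gives
`⟨u, Σ̂u⟩/2 + ξ‖u_{Sᶜ}‖₁ ≤ ξ‖u_S‖₁`, so `u` lies in the restricted-eigenvalue cone, and
Cauchy–Schwarz on `S` yields `κ⟨u, Σ̂u⟩ ≤ 4ξ²s0`. On the other hand the KKT conditions force
`|(Σ̂u)_i| = ξ` on the support of `θ̂`, while `‖Σ̂u‖₂² ≤ ‖Σ̂‖₂⟨u, Σ̂u⟩` for positive semidefinite `Σ̂`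
(Cauchy–Schwarz for the form `Σ̂`). Hence `ξ²‖θ̂‖₀ ≤ ‖Σ̂‖₂ · 4ξ²s0/κ`.
-/

namespace Matrix.PosSemidef

variable {ι : Type*} [Fintype ι] {M : Matrix ι ι ℝ}

lemma dotProduct_mulVec_comm (hM : M.PosSemidef) (v w : ι → ℝ) :
    v ⬝ᵥ M *ᵥ w = w ⬝ᵥ M *ᵥ v := by
  rw [← dotProduct_transpose_mulVec, ← conjTranspose_eq_transpose_of_trivial, hM.isHermitian.eq]

lemma quadForm_nonneg (hM : M.PosSemidef) (v : ι → ℝ) : 0 ≤ v ⬝ᵥ M *ᵥ v := by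
  simpa using hM.dotProduct_mulVec_nonneg v

lemma quadForm_add_smul (hM : M.PosSemidef) (v w : ι → ℝ) (t : ℝ) :
    (v + t • w) ⬝ᵥ M *ᵥ (v + t • w) =
      v ⬝ᵥ M *ᵥ v + 2 * t * (v ⬝ᵥ M *ᵥ w) + t ^ 2 * (w ⬝ᵥ M *ᵥ w) := by
  simp only [mulVec_add, mulVec_smul, add_dotProduct, dotProduct_add, smul_dotProduct,
    dotProduct_smul, smul_eq_mul, hM.dotProduct_mulVec_comm w v]
  ring

lemma dotProduct_mulVec_sq_le (hM : M.PosSemidef) (v w : ι → ℝ) :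
    (v ⬝ᵥ M *ᵥ w) ^ 2 ≤ (v ⬝ᵥ M *ᵥ v) * (w ⬝ᵥ M *ᵥ w) := by
  have h := discrim_le_zero (a := w ⬝ᵥ M *ᵥ w) (b := 2 * (v ⬝ᵥ M *ᵥ w)) (c := v ⬝ᵥ M *ᵥ v)
    fun t => by linarith [hM.quadForm_add_smul v w t, hM.quadForm_nonneg (v + t • w)]
  rw [discrim] at h
  linarith

lemma mul_quadForm_nonneg (hM : M.PosSemidef) {B : ℝ}
    (hB : ∀ v : ι → ℝ, v ⬝ᵥ M *ᵥ v ≤ B * ∑ i, v i ^ 2) (u : ι → ℝ) :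
    0 ≤ B * (u ⬝ᵥ M *ᵥ u) := by
  have hQ := hM.quadForm_nonneg u
  rcases le_or_gt 0 B with hB0 | hB0
  · positivity
  · have hQ0 : u ⬝ᵥ M *ᵥ u = 0 :=
      le_antisymm ((hB u).trans (mul_nonpos_of_nonpos_of_nonneg hB0.le (by positivity))) hQ
    simp [hQ0]

lemma sum_mulVec_sq_le (hM : M.PosSemidef) {B : ℝ}
    (hB : ∀ v : ι → ℝ, v ⬝ᵥ M *ᵥ v ≤ B * ∑ i, v i ^ 2) (u : ι → ℝ) :
    ∑ i, (M *ᵥ u) i ^ 2 ≤ B * (u ⬝ᵥ M *ᵥ u) := by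
  set W := ∑ i, (M *ᵥ u) i ^ 2
  have hW : W = (M *ᵥ u) ⬝ᵥ M *ᵥ u := by simp [W, dotProduct, sq]
  have hCS : W ^ 2 ≤ B * W * (u ⬝ᵥ M *ᵥ u) := by
    calc W ^ 2 ≤ ((M *ᵥ u) ⬝ᵥ M *ᵥ (M *ᵥ u)) * (u ⬝ᵥ M *ᵥ u) :=
          hW ▸ hM.dotProduct_mulVec_sq_le _ _
      _ ≤ B * W * (u ⬝ᵥ M *ᵥ u) :=
          mul_le_mul_of_nonneg_right (hB _) (hM.quadForm_nonneg u)
  rcases (show 0 ≤ W by positivity).eq_or_lt with hW0 | hW0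
  · exact hW0 ▸ hM.mul_quadForm_nonneg hB u
  · nlinarith

lemma nonneg_of_quadForm_le [Nonempty ι] (hM : M.PosSemidef) {B : ℝ}
    (hB : ∀ v : ι → ℝ, v ⬝ᵥ M *ᵥ v ≤ B * ∑ i, v i ^ 2) : 0 ≤ B := by
  classical
  obtain ⟨i⟩ := ‹Nonempty ι›
  simpa [Pi.single_apply] using (hM.quadForm_nonneg (Pi.single i 1)).trans (hB (Pi.single i 1))

end Matrix.PosSemidef

lemma eq_zero_of_forall_abs_lt_nonneg {L C δ : ℝ} (hδ : 0 < δ)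
    (h : ∀ t : ℝ, |t| < δ → 0 ≤ t * L + t ^ 2 * C) : L = 0 := by
  have hmin : IsLocalMin (fun t : ℝ => t * L + t ^ 2 * C) 0 := by
    filter_upwards [Metric.ball_mem_nhds 0 hδ] with t ht
    simpa using h t (by simpa using ht)
  have hderiv : HasDerivAt (fun t : ℝ => t * L + t ^ 2 * C) L 0 := by
    have h :=
      ((hasDerivAt_id' (0 : ℝ)).mul_const L).add ((hasDerivAt_pow 2 (0 : ℝ)).mul_const C)
    exact h.congr_deriv (by simp)
  exact hmin.hasDerivAt_eq_zero hderiv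

lemma abs_add_eq_of_abs_lt {a t : ℝ} (h : |t| < |a|) : |a + t| = |a| + t * Real.sign a := by
  rcases lt_trichotomy a 0 with ha | rfl | ha
  · rw [abs_of_neg ha] at h
    rw [abs_of_neg ha, Real.sign_of_neg ha, abs_of_neg (by linarith [le_abs_self t])]
    ring
  · linarith [abs_nonneg t, abs_zero (α := ℝ)]
  · rw [abs_of_pos ha] at h
    rw [abs_of_pos ha, Real.sign_of_pos ha, abs_of_pos (by linarith [neg_abs_le t])]
    ring

section ZeroNoiseLasso

variable {p : ℕ} {Sig : Matrix (Fin p) (Fin p) ℝ} {th0 thZN : Fin p → ℝ} {xi : ℝ}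

lemma l1n_add_single (th : Fin p → ℝ) (i : Fin p) (t : ℝ) :
    l1n (th + Pi.single i t) = l1n th + (|th i + t| - |th i|) := by
  have h : ∀ j, |(th + Pi.single i t : Fin p → ℝ) j| =
      |th j| + (Pi.single i (|th i + t| - |th i|) : Fin p → ℝ) j := by
    intro j
    rcases eq_or_ne j i with rfl | hj
    · simp
    · simp [hj]
  simp only [l1n, h, Finset.sum_add_distrib, Finset.sum_pi_single']
  simp

lemma znObj_add_single (hSig : Sig.PosSemidef) (th : Fin p → ℝ) (i : Fin p) (t : ℝ) :
    znObj Sig th0 xi (th + Pi.single i t) = znObj Sig th0 xi th +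
      (t * (Sig *ᵥ (th - th0)) i + t ^ 2 / 2 * Sig i i + xi * (|th i + t| - |th i|)) := by
  have hshift : th + Pi.single i t - th0 = (th - th0) + t • Pi.single i 1 := by
    rw [← Pi.single_smul', smul_eq_mul, mul_one]
    abel
  rw [znObj, znObj, hshift, hSig.quadForm_add_smul, l1n_add_single,
    hSig.dotProduct_mulVec_comm (th - th0) (Pi.single i 1), mulVec_single_one, single_dotProduct,
    single_dotProduct, col_apply]
  ring

lemma mulVec_sub_apply_eq_of_forall_znObj_le (hSig : Sig.PosSemidef)
    (hmin : ∀ th, znObj Sig th0 xi thZN ≤ znObj Sig th0 xi th) {i : Fin p} (hi : thZN i ≠ 0) :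
    (Sig *ᵥ (thZN - th0)) i = -(xi * Real.sign (thZN i)) := by
  have hL : (Sig *ᵥ (thZN - th0)) i + xi * Real.sign (thZN i) = 0 := by
    refine eq_zero_of_forall_abs_lt_nonneg (abs_pos.mpr hi) (C := Sig i i / 2) fun t ht => ?_
    have h := hmin (thZN + Pi.single i t)
    rw [znObj_add_single hSig, abs_add_eq_of_abs_lt ht] at h
    linarith
  linarith

lemma l1n_sub_l1n_le {S : Finset (Fin p)} (hS : ∀ i ∉ S, th0 i = 0) (th : Fin p → ℝ) :
    l1n th0 - l1n th ≤ ∑ i ∈ S, |(th - th0) i| - ∑ i ∈ Sᶜ, |(th - th0) i| := by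
  have hth0 : l1n th0 = ∑ i ∈ S, |th0 i| := by
    rw [l1n, ← Finset.sum_add_sum_compl S, add_eq_left]
    exact Finset.sum_eq_zero fun i hi => by simp [hS i (Finset.mem_compl.mp hi)]
  have hcompl : ∑ i ∈ Sᶜ, |(th - th0) i| = ∑ i ∈ Sᶜ, |th i| :=
    Finset.sum_congr rfl fun i hi => by simp [hS i (Finset.mem_compl.mp hi)]
  have hS_le : ∑ i ∈ S, |th0 i| - ∑ i ∈ S, |th i| ≤ ∑ i ∈ S, |(th - th0) i| := by
    rw [← Finset.sum_sub_distrib]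
    exact Finset.sum_le_sum fun i _ => by
      simpa [abs_sub_comm] using abs_sub_abs_le_abs_sub (th0 i) (th i)
  rw [hth0, l1n, ← Finset.sum_add_sum_compl S, hcompl]
  linarith

lemma znObj_minimizer_cone {S : Finset (Fin p)} (hS : ∀ i ∉ S, th0 i = 0) (hxi : 0 ≤ xi)
    (hmin : ∀ th, znObj Sig th0 xi thZN ≤ znObj Sig th0 xi th) :
    (thZN - th0) ⬝ᵥ Sig *ᵥ (thZN - th0) / 2 + xi * ∑ i ∈ Sᶜ, |(thZN - th0) i| ≤
      xi * ∑ i ∈ S, |(thZN - th0) i| := by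
  have hbasic := hmin th0
  simp only [znObj, sub_self, mulVec_zero, dotProduct_zero, mul_zero, zero_add] at hbasic
  nlinarith [mul_le_mul_of_nonneg_left (l1n_sub_l1n_le hS thZN) hxi]

lemma mul_le_of_restricted_eigenvalue {ι : Type*} [Fintype ι] (S : Finset ι) (u : ι → ℝ)
    {Q xi kappa : ℝ}
    (hkappa : 0 < kappa) (hQ : 0 ≤ Q) (hcone : Q / 2 ≤ xi * ∑ i ∈ S, |u i|)
    (hRE : kappa * ∑ i, u i ^ 2 ≤ Q) :
    kappa * Q ≤ 4 * xi ^ 2 * #S := by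
  set A := ∑ i ∈ S, |u i|
  have hA : A ^ 2 ≤ #S * ∑ i, u i ^ 2 :=
    calc A ^ 2 ≤ #S * ∑ i ∈ S, |u i| ^ 2 := sq_sum_le_card_mul_sum_sq
      _ ≤ #S * ∑ i, u i ^ 2 := by
        simp only [sq_abs]
        exact mul_le_mul_of_nonneg_left
          (Finset.sum_le_univ_sum_of_nonneg fun i => sq_nonneg (u i)) (Nat.cast_nonneg _)
  rcases hQ.eq_or_lt with rfl | hQpos
  · simp only [mul_zero]
    positivity
  refine le_of_mul_le_mul_right ?_ hQpos
  calc kappa * Q * Q = kappa * Q ^ 2 := by ring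
    _ ≤ kappa * (4 * xi ^ 2 * A ^ 2) := by gcongr; nlinarith
    _ ≤ kappa * (4 * xi ^ 2 * (#S * ∑ i, u i ^ 2)) := by gcongr
    _ = 4 * xi ^ 2 * #S * (kappa * ∑ i, u i ^ 2) := by ring
    _ ≤ 4 * xi ^ 2 * #S * Q := by gcongr

lemma l0n_mul_sq_le_of_forall_znObj_le (hSig : Sig.PosSemidef) {B : ℝ}
    (hB : ∀ v : Fin p → ℝ, v ⬝ᵥ Sig *ᵥ v ≤ B * ∑ i, v i ^ 2)
    (hmin : ∀ th, znObj Sig th0 xi thZN ≤ znObj Sig th0 xi th) :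
    (l0n thZN : ℝ) * xi ^ 2 ≤ B * ((thZN - th0) ⬝ᵥ Sig *ᵥ (thZN - th0)) := by
  have hkkt : ∀ i ∈ suppv thZN, (Sig *ᵥ (thZN - th0)) i ^ 2 = xi ^ 2 := fun i hi => by
    have hi : thZN i ≠ 0 := by simpa [suppv] using hi
    rw [mulVec_sub_apply_eq_of_forall_znObj_le hSig hmin hi]
    rcases Real.sign_apply_eq_of_ne_zero _ hi with h | h <;> simp [h]
  calc (l0n thZN : ℝ) * xi ^ 2 = ∑ i ∈ suppv thZN, (Sig *ᵥ (thZN - th0)) i ^ 2 := by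
        rw [Finset.sum_congr rfl hkkt, Finset.sum_const, nsmul_eq_mul, l0n, suppv]
    _ ≤ ∑ i, (Sig *ᵥ (thZN - th0)) i ^ 2 :=
        Finset.sum_le_univ_sum_of_nonneg fun i => sq_nonneg _
    _ ≤ B * ((thZN - th0) ⬝ᵥ Sig *ᵥ (thZN - th0)) := hSig.sum_mulVec_sq_le hB _

end ZeroNoiseLasso

theorem stmt0_general
    (n p : ℕ)
    (X : Matrix (Fin n) (Fin p) ℝ)
    (Sig : Matrix (Fin p) (Fin p) ℝ)
    (hSigDef : Sig = (1 / (n : ℝ)) • (Xᵀ * X))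
    (th0 : Fin p → ℝ) (s0 : ℕ) (hs0 : s0 = (suppv th0).card)
    (xi : ℝ) (hxi : 0 < xi)
    -- `kappa` is the restricted eigenvalue constant `κ̂(s0,1)` (any lower bound on the
    -- restricted quadratic form; applying with the exact minimum recovers the claim)
    (kappa : ℝ) (hkappa : 0 < kappa)
    (hRE : ∀ (J : Finset (Fin p)) (u : Fin p → ℝ), J.card ≤ s0 →
      (∑ i ∈ Jᶜ, |u i|) ≤ (∑ i ∈ J, |u i|) →
      kappa * (∑ i, (u i)^2) ≤ u ⬝ᵥ (Sig *ᵥ u))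
    -- `B` is the operator norm `‖Σ̂‖₂` (any upper bound on the quadratic form; for the
    -- symmetric PSD matrix `Σ̂` the least such `B` is exactly `‖Σ̂‖₂`)
    (B : ℝ)
    (hB : ∀ u : Fin p → ℝ, u ⬝ᵥ (Sig *ᵥ u) ≤ B * (∑ i, (u i)^2))
    (thZN : Fin p → ℝ)
    (hmin : ∀ th : Fin p → ℝ, znObj Sig th0 xi thZN ≤ znObj Sig th0 xi th) :
    (l0n thZN : ℝ) ≤ (1 + 4 * B / kappa) * s0 := by
  have hSig : Sig.PosSemidef := by
    rw [hSigDef, ← conjTranspose_eq_transpose_of_trivial]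
    exact (posSemidef_conjTranspose_mul_self X).smul (by positivity)
  rcases isEmpty_or_nonempty (Fin p) with _ | _
  · simp [l0n, hs0, suppv]
  have hS : ∀ i ∉ suppv th0, th0 i = 0 := by simp [suppv]
  have hcone := znObj_minimizer_cone (Sig := Sig) hS hxi.le hmin
  have hcount := l0n_mul_sq_le_of_forall_znObj_le hSig hB hmin
  set u := thZN - th0
  have hQ := hSig.quadForm_nonneg u
  have hcompl : 0 ≤ xi * ∑ i ∈ (suppv th0)ᶜ, |u i| := by positivity
  have hcone' : ∑ i ∈ (suppv th0)ᶜ, |u i| ≤ ∑ i ∈ suppv th0, |u i| :=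
    le_of_mul_le_mul_left (by linarith) hxi
  have hQ_le : kappa * (u ⬝ᵥ Sig *ᵥ u) ≤ 4 * xi ^ 2 * s0 := hs0 ▸
    mul_le_of_restricted_eigenvalue _ u hkappa hQ (by linarith) (hRE _ u hs0.ge hcone')
  have hB0 := hSig.nonneg_of_quadForm_le hB
  have hl0 : (l0n thZN : ℝ) * kappa ≤ 4 * B * s0 := by
    refine le_of_mul_le_mul_right ?_ (pow_pos hxi 2)
    nlinarith [mul_le_mul_of_nonneg_left hQ_le hB0, mul_le_mul_of_nonneg_right hcount hkappa.le]
  calc (l0n thZN : ℝ) ≤ 4 * B * s0 / kappa := (le_div_iff₀ hkappa).2 hl0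
    _ ≤ (1 + 4 * B / kappa) * s0 := by
      rw [add_mul, one_mul, div_mul_eq_mul_div]
      linarith [Nat.cast_nonneg (α := ℝ) s0]

/-- Lemma 1 of the paper, deterministic designs.
Let `X ∈ ℝ^{n×p}` be a deterministic design with empirical covariance `Σ̂ = XᵀX/n`, let
`θ0` have support `S` of size `s0`, and `ξ > 0`.  If the restricted eigenvalue constant
`κ̂(s0,1)` is positive (formalized: `kappa > 0` is any lower bound for the restricted
quadratic form) then any minimizer `θ̂ZN(ξ)` of the zero-noise Lasso objective satisfies
`‖θ̂ZN(ξ)‖₀ ≤ (1 + 4‖Σ̂‖₂/κ̂(s0,1))·s0`, where the operator norm `‖Σ̂‖₂` of the symmetric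
positive semidefinite matrix `Σ̂` is formalized as any upper bound `B` for its quadratic
form on unit vectors. -/
theorem stmt0
    (n p : ℕ) (hn : 0 < n)
    (X : Matrix (Fin n) (Fin p) ℝ)
    (Sig : Matrix (Fin p) (Fin p) ℝ)
    (hSigDef : Sig = (1 / (n : ℝ)) • (Xᵀ * X))
    (th0 : Fin p → ℝ) (s0 : ℕ) (hs0 : s0 = (suppv th0).card)
    (xi : ℝ) (hxi : 0 < xi)
    -- `kappa` is the restricted eigenvalue constant `κ̂(s0,1)` (any lower bound on the
    -- restricted quadratic form; applying with the exact minimum recovers the claim)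
    (kappa : ℝ) (hkappa : 0 < kappa)
    (hRE : ∀ (J : Finset (Fin p)) (u : Fin p → ℝ), J.card ≤ s0 →
      (∑ i ∈ Jᶜ, |u i|) ≤ (∑ i ∈ J, |u i|) →
      kappa * (∑ i, (u i)^2) ≤ u ⬝ᵥ (Sig *ᵥ u))
    -- `B` is the operator norm `‖Σ̂‖₂` (any upper bound on the quadratic form; for the
    -- symmetric PSD matrix `Σ̂` the least such `B` is exactly `‖Σ̂‖₂`)
    (B : ℝ)
    (hB : ∀ u : Fin p → ℝ, u ⬝ᵥ (Sig *ᵥ u) ≤ B * (∑ i, (u i)^2))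
    (thZN : Fin p → ℝ)
    (hmin : ∀ th : Fin p → ℝ, znObj Sig th0 xi thZN ≤ znObj Sig th0 xi th) :
    (l0n thZN : ℝ) ≤ (1 + 4 * B / kappa) * s0 :=
  stmt0_general n p X Sig hSigDef th0 s0 hs0 xi hxi kappa hkappa hRE B hB thZN hmin
end
end

section
/- Let Σ̂ ∈ ℝ^{p×p} be positive semidefinite, θ0 ∈ ℝ^p with support S of size s0, ξ > 0, and suppose κ̂(s0,1) > 0. Then any minimizer θ̂ZN(ξ) of the zero-noise Lasso objective satisfies the following bounds for û = (θ̂ZN(ξ) − θ0)/ξ: (i) ‖û_{S^c}‖₁ ≤ ‖û_S‖₁; (ii) ‖û_S‖₁ ≤ 2s0/κ̂(s0,1); (iii) ⟨û, Σ̂û⟩ ≤ 4s0/κ̂(s0,1). -/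
open Matrix Finset MeasureTheory ProbabilityTheory
noncomputable section

/-!
Writing `θ̂ = θ₀ + ξ u` and comparing the objective at `θ̂` with its value at `θ₀` gives, since
`θ₀` vanishes off `S` and by the reverse triangle inequality on `S`, the basic inequality
`½ ⟨u, Σ̂ u⟩ + ‖u_{Sᶜ}‖₁ ≤ ‖u_S‖₁`. As `Σ̂ ⪰ 0` this is the cone condition (i), so the restricted
eigenvalue bound applies; with Cauchy–Schwarz,
`κ ‖u_S‖₁² ≤ κ s₀ ‖u‖₂² ≤ s₀ ⟨u, Σ̂ u⟩ ≤ 2 s₀ ‖u_S‖₁`, which is (ii), and (iii) follows from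
`⟨u, Σ̂ u⟩ ≤ 2 ‖u_S‖₁`.
-/

theorem sum_abs_sub_add_le_sum_abs_add {ι : Type*} [Fintype ι] [DecidableEq ι] {S : Finset ι}
    {x : ι → ℝ} (hx : ∀ i ∉ S, x i = 0) (v : ι → ℝ) :
    ∑ i, |x i| - ∑ i ∈ S, |v i| + ∑ i ∈ Sᶜ, |v i| ≤ ∑ i, |x i + v i| := by
  rw [← S.sum_add_sum_compl (fun i => |x i|), ← S.sum_add_sum_compl (fun i => |x i + v i|)]
  have hon : ∑ i ∈ S, |x i| - ∑ i ∈ S, |v i| ≤ ∑ i ∈ S, |x i + v i| := by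
    rw [← Finset.sum_sub_distrib]
    exact Finset.sum_le_sum fun i _ => abs_sub_abs_le_abs_add (x i) (v i)
  have hoff : ∀ i ∈ Sᶜ, x i = 0 := fun i hi => hx i (Finset.mem_compl.mp hi)
  have hx0 : ∑ i ∈ Sᶜ, |x i| = 0 := Finset.sum_eq_zero fun i hi => by simp [hoff i hi]
  have hxv : ∑ i ∈ Sᶜ, |x i + v i| = ∑ i ∈ Sᶜ, |v i| :=
    Finset.sum_congr rfl fun i hi => by rw [hoff i hi, zero_add]
  linarith

theorem sq_sum_abs_le_card_mul_sum_sq {ι : Type*} [Fintype ι] (S : Finset ι) (u : ι → ℝ) :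
    (∑ i ∈ S, |u i|) ^ 2 ≤ S.card * ∑ i, u i ^ 2 := by
  have hS : ∑ i ∈ S, u i ^ 2 ≤ ∑ i, u i ^ 2 :=
    Finset.sum_le_univ_sum_of_nonneg fun i => sq_nonneg (u i)
  calc (∑ i ∈ S, |u i|) ^ 2 ≤ S.card * ∑ i ∈ S, |u i| ^ 2 := sq_sum_le_card_mul_sum_sq
    _ = S.card * ∑ i ∈ S, u i ^ 2 := by simp only [sq_abs]
    _ ≤ S.card * ∑ i, u i ^ 2 := by gcongr

theorem sum_abs_le_of_sum_sq_le {ι : Type*} [Fintype ι] {S : Finset ι} {u : ι → ℝ} {Q κ : ℝ}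
    (hκ : 0 < κ) (hlower : κ * ∑ i, u i ^ 2 ≤ Q) (hupper : Q ≤ 2 * ∑ i ∈ S, |u i|) :
    ∑ i ∈ S, |u i| ≤ 2 * S.card / κ := by
  set a := ∑ i ∈ S, |u i|
  have ha : 0 ≤ a := Finset.sum_nonneg fun i _ => abs_nonneg (u i)
  have hsq : κ * a ^ 2 ≤ 2 * S.card * a :=
    calc κ * a ^ 2 ≤ κ * (S.card * ∑ i, u i ^ 2) := by
          gcongr; exact sq_sum_abs_le_card_mul_sum_sq S u
      _ = S.card * (κ * ∑ i, u i ^ 2) := by ring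
      _ ≤ S.card * (2 * a) := mul_le_mul_of_nonneg_left (hlower.trans hupper) (by positivity)
      _ = 2 * S.card * a := by ring
  rw [le_div_iff₀ hκ]
  rcases ha.eq_or_lt with h | h
  · rw [← h, zero_mul]; positivity
  · nlinarith

theorem znObj_basic_inequality {p : ℕ} {Sig : Matrix (Fin p) (Fin p) ℝ} {th0 u : Fin p → ℝ}
    {xi : ℝ} (hxi : 0 < xi) {S : Finset (Fin p)} (hS : ∀ i ∉ S, th0 i = 0)
    (hmin : znObj Sig th0 xi (th0 + xi • u) ≤ znObj Sig th0 xi th0) :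
    (1 / 2) * u ⬝ᵥ (Sig *ᵥ u) + ∑ i ∈ Sᶜ, |u i| ≤ ∑ i ∈ S, |u i| := by
  have habs : ∀ T : Finset (Fin p), ∑ i ∈ T, |(xi • u) i| = xi * ∑ i ∈ T, |u i| := fun T => by
    simp only [Finset.mul_sum, Pi.smul_apply, smul_eq_mul, abs_mul, abs_of_pos hxi]
  have hl1 := sum_abs_sub_add_le_sum_abs_add hS (xi • u)
  rw [habs, habs] at hl1
  simp only [znObj, l1n, add_sub_cancel_left, sub_self, mulVec_zero, dotProduct_zero,
    mulVec_smul, dotProduct_smul, smul_dotProduct, smul_eq_mul, Pi.add_apply] at hmin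
  have hxi2 : 0 < xi ^ 2 := by positivity
  nlinarith

/-- For `Σ̂` positive semidefinite, `θ0` with support `S` of size `s0`,
`ξ > 0` and `κ̂(s0,1) > 0` (formalized: `kappa > 0` any lower bound on the restricted
quadratic form), any minimizer `θ̂ZN(ξ)` of the zero-noise Lasso objective satisfies,
with `û = (θ̂ZN(ξ) − θ0)/ξ`:
(i) `‖û_{Sᶜ}‖₁ ≤ ‖û_S‖₁`; (ii) `‖û_S‖₁ ≤ 2s0/κ̂(s0,1)`; (iii) `⟨û, Σ̂û⟩ ≤ 4s0/κ̂(s0,1)`. -/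
theorem stmt1
    (p : ℕ)
    (Sig : Matrix (Fin p) (Fin p) ℝ) (hSig : Sig.PosSemidef)
    (th0 : Fin p → ℝ) (s0 : ℕ) (hs0 : s0 = (suppv th0).card)
    (xi : ℝ) (hxi : 0 < xi)
    (kappa : ℝ) (hkappa : 0 < kappa)
    (hRE : ∀ (J : Finset (Fin p)) (u : Fin p → ℝ), J.card ≤ s0 →
      (∑ i ∈ Jᶜ, |u i|) ≤ (∑ i ∈ J, |u i|) →
      kappa * (∑ i, (u i)^2) ≤ u ⬝ᵥ (Sig *ᵥ u))
    (thZN : Fin p → ℝ)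
    (hmin : ∀ th : Fin p → ℝ, znObj Sig th0 xi thZN ≤ znObj Sig th0 xi th)
    (u : Fin p → ℝ) (hu : u = (1/xi) • (thZN - th0)) :
    (∑ i ∈ (suppv th0)ᶜ, |u i|) ≤ (∑ i ∈ suppv th0, |u i|) ∧
    (∑ i ∈ suppv th0, |u i|) ≤ 2 * s0 / kappa ∧
    u ⬝ᵥ (Sig *ᵥ u) ≤ 4 * s0 / kappa := by
  have hvanish : ∀ i ∉ suppv th0, th0 i = 0 := by simp [suppv]
  have hthZN : thZN = th0 + xi • u := by
    rw [hu, smul_smul, mul_one_div_cancel hxi.ne', one_smul, add_sub_cancel]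
  have hbasic := znObj_basic_inequality hxi hvanish (hthZN ▸ hmin th0)
  have hQ : 0 ≤ u ⬝ᵥ (Sig *ᵥ u) := by simpa using hSig.dotProduct_mulVec_nonneg u
  have hcone : ∑ i ∈ (suppv th0)ᶜ, |u i| ≤ ∑ i ∈ suppv th0, |u i| := by linarith
  have hupper : u ⬝ᵥ (Sig *ᵥ u) ≤ 2 * ∑ i ∈ suppv th0, |u i| := by
    have : 0 ≤ ∑ i ∈ (suppv th0)ᶜ, |u i| := Finset.sum_nonneg fun i _ => abs_nonneg (u i)
    linarith
  have hl1 : ∑ i ∈ suppv th0, |u i| ≤ 2 * s0 / kappa := by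
    simpa [hs0] using sum_abs_le_of_sum_sq_le hkappa (hRE _ u hs0.ge hcone) hupper
  refine ⟨hcone, hl1, ?_⟩
  calc u ⬝ᵥ (Sig *ᵥ u) ≤ 2 * (2 * s0 / kappa) := by linarith
    _ = 4 * s0 / kappa := by ring
end
end

section
/- Let X ∈ ℝ^{n×p} be deterministic with Σ̂ = (XᵀX)/n, let T0 ⊆ [p] be such that Σ̂_{T0,T0} is invertible, let W be a centered Gaussian vector in ℝ^n with covariance σ²I_n, and set r̂ = (XᵀW)/n. Then for any c1 > 1, P(‖Σ̂_{T0,T0}^{-1} r̂_{T0}‖_∞ ≥ σ √(2c1 log p / n) · ‖Σ̂_{T0,T0}^{-1}‖₂^{1/2}) ≤ 2p^{1−c1}. -/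
/-!
Each coordinate of `Σ̂_{T0,T0}⁻¹ r̂_{T0}` is a linear form `a ⬝ᵥ W` in the noise, where `a` is
`1/n` times the design applied to the corresponding row of `Σ̂_{T0,T0}⁻¹`; since that row times
`Σ̂_{T0,T0}` is a unit vector, `‖a‖² = (Σ̂_{T0,T0}⁻¹)ᵢᵢ / n ≤ ‖Σ̂_{T0,T0}⁻¹‖₂ / n`. A Gaussian linear
form is sub-Gaussian with parameter `σ² ‖a‖²`, so the Chernoff bound gives each coordinate the
two-sided tail `2 p^{-c1}` at the threshold `σ √(2 c1 log p / n) ‖Σ̂_{T0,T0}⁻¹‖₂^{1/2}`; a union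
bound over the at most `p` coordinates finishes the proof.
-/

open Matrix Finset MeasureTheory ProbabilityTheory
noncomputable section

open scoped NNReal
open Real

namespace ProbabilityTheory.HasSubgaussianMGF

variable {Ω : Type*} {mΩ : MeasurableSpace Ω} {μ : Measure Ω} {X : Ω → ℝ} {c : ℝ≥0}

lemma mono (h : HasSubgaussianMGF X c μ) {c' : ℝ≥0} (hc : c ≤ c') :
    HasSubgaussianMGF X c' μ where
  integrable_exp_mul := h.integrable_exp_mul
  mgf_le t := (h.mgf_le t).trans <| exp_le_exp.mpr <| by gcongr

lemma measureReal_abs_ge_le (h : HasSubgaussianMGF X c μ) {ε : ℝ}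
    (hε : 0 ≤ ε) : μ.real {ω | ε ≤ |X ω|} ≤ 2 * exp (-ε ^ 2 / (2 * c)) := by
  have hunion : {ω | ε ≤ |X ω|} = {ω | ε ≤ X ω} ∪ {ω | ε ≤ (-X) ω} := by
    ext ω; simp [le_abs]
  calc μ.real {ω | ε ≤ |X ω|}
      ≤ μ.real {ω | ε ≤ X ω} + μ.real {ω | ε ≤ (-X) ω} := hunion ▸ measureReal_union_le _ _
    _ ≤ exp (-ε ^ 2 / (2 * c)) + exp (-ε ^ 2 / (2 * c)) :=
      add_le_add (h.measure_ge_le hε) (h.neg.measure_ge_le hε)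
    _ = 2 * exp (-ε ^ 2 / (2 * c)) := (two_mul _).symm

end ProbabilityTheory.HasSubgaussianMGF

lemma hasSubgaussianMGF_id_gaussianReal (v : ℝ≥0) :
    HasSubgaussianMGF id v (gaussianReal 0 v) where
  integrable_exp_mul := integrable_exp_mul_gaussianReal
  mgf_le t := by simp [mgf_gaussianReal (Measure.map_id)]

lemma hasSubgaussianMGF_dotProduct_pi_gaussianReal {ι : Type*} [Fintype ι] (v : ℝ≥0)
    (a : ι → ℝ) :
    HasSubgaussianMGF (fun w => a ⬝ᵥ w) (∑ j, ⟨a j ^ 2, sq_nonneg _⟩ * v)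
      (Measure.pi fun _ : ι => gaussianReal 0 v) := by
  have hcoord (j : ι) : HasSubgaussianMGF (fun w : ι → ℝ => a j * w j)
      (⟨a j ^ 2, sq_nonneg _⟩ * v) (Measure.pi fun _ : ι => gaussianReal 0 v) := by
    have h := (hasSubgaussianMGF_id_gaussianReal v).const_mul (a j)
    rw [← (measurePreserving_eval (fun _ : ι => gaussianReal 0 v) j).map_eq] at h
    exact h.of_map (measurable_pi_apply j).aemeasurable
  have hindep := iIndepFun_pi (μ := fun _ : ι => gaussianReal 0 v)
    (X := fun j x => a j * x) (fun j => by fun_prop)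
  simpa [dotProduct] using HasSubgaussianMGF.sum_of_iIndepFun hindep (s := Finset.univ)
    (fun j _ => hcoord j)

lemma measureReal_abs_dotProduct_ge_le {ι : Type*} [Fintype ι] (v : ℝ≥0) (a : ι → ℝ)
    {ε c : ℝ} (hε : 0 ≤ ε) (hc : v * (a ⬝ᵥ a) ≤ c) :
    (Measure.pi fun _ : ι => gaussianReal 0 v).real {w | ε ≤ |a ⬝ᵥ w|}
      ≤ 2 * exp (-ε ^ 2 / (2 * c)) := by
  have hc0 : 0 ≤ c := (mul_nonneg v.2 (dotProduct_self_star_nonneg a)).trans hc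
  have hsum : ((∑ j, ⟨a j ^ 2, sq_nonneg _⟩ * v : ℝ≥0) : ℝ) = v * (a ⬝ᵥ a) := by
    rw [NNReal.coe_sum, dotProduct, Finset.mul_sum]
    exact Finset.sum_congr rfl fun j _ => by change a j ^ 2 * (v : ℝ) = _; ring
  have h := (hasSubgaussianMGF_dotProduct_pi_gaussianReal v a).mono
    (c' := c.toNNReal) (by rw [← NNReal.coe_le_coe, hsum, Real.coe_toNNReal _ hc0]; exact hc)
  simpa [Real.coe_toNNReal _ hc0] using h.measureReal_abs_ge_le hε

section GramMatrix

variable {k m : Type*} [Fintype k] [Fintype m]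

lemma mulVec_smul_transpose_mulVec_apply (M : Matrix k k ℝ) (Y : Matrix m k ℝ) (r : ℝ)
    (w : m → ℝ) (i : k) : (M *ᵥ (r • (Yᵀ *ᵥ w))) i = (r • (Y *ᵥ M i)) ⬝ᵥ w := by
  rw [mulVec_smul, Pi.smul_apply, smul_dotProduct]
  change r • (M i ⬝ᵥ (Yᵀ *ᵥ w)) = _
  rw [dotProduct_mulVec, vecMul_transpose]

lemma dotProduct_self_smul_mulVec_row [DecidableEq k] {M : Matrix k k ℝ} {Y : Matrix m k ℝ}
    {r : ℝ} (hM : M * (r • (Yᵀ * Y)) = 1) (i : k) :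
    (r • (Y *ᵥ M i)) ⬝ᵥ (r • (Y *ᵥ M i)) = r * M i i := by
  have hrow : M i ᵥ* (r • (Yᵀ * Y)) = Pi.single i 1 := by
    change (M * (r • (Yᵀ * Y))) i = _
    rw [hM]
    ext j
    simp [one_apply, Pi.single_apply, eq_comm]
  calc (r • (Y *ᵥ M i)) ⬝ᵥ (r • (Y *ᵥ M i))
      = r * (M i ⬝ᵥ ((r • (Yᵀ * Y)) *ᵥ M i)) := by
        simp only [smul_dotProduct, dotProduct_smul, smul_mulVec, ← mulVec_mulVec,
          dotProduct_mulVec _ Yᵀ, vecMul_transpose, smul_eq_mul]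
    _ = r * M i i := by rw [dotProduct_mulVec, hrow, single_dotProduct, one_mul]

lemma diag_le_of_forall_dotProduct_mulVec_le [DecidableEq k] {A : Matrix k k ℝ} {B : ℝ}
    (h : ∀ u, u ⬝ᵥ (A *ᵥ u) ≤ B * ∑ j, u j ^ 2) (i : k) : A i i ≤ B := by
  simpa [sq, Pi.single_apply] using h (Pi.single i 1)

lemma diag_inv_smul_transpose_mul_self_pos [DecidableEq k] {Y : Matrix m k ℝ} {r : ℝ}
    (hr : 0 ≤ r) (hdet : IsUnit (r • (Yᵀ * Y)).det) (i : k) : 0 < (r • (Yᵀ * Y))⁻¹ i i := by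
  have hpsd : (r • (Yᵀ * Y)).PosSemidef := by
    simpa [conjTranspose_eq_transpose_of_trivial] using
      (posSemidef_conjTranspose_mul_self Y).smul hr
  exact ((hpsd.posDef_iff_isUnit.mpr ((isUnit_iff_isUnit_det _).mpr hdet)).inv).diag_pos

lemma measureReal_abs_inv_smul_transpose_mul_self_mulVec_ge_le [DecidableEq k] (v : ℝ≥0)
    {Y : Matrix m k ℝ} {r : ℝ} (hr : 0 ≤ r) (hdet : IsUnit (r • (Yᵀ * Y)).det) (i : k)
    {ε B : ℝ} (hε : 0 ≤ ε) (hB : (r • (Yᵀ * Y))⁻¹ i i ≤ B) :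
    (Measure.pi fun _ : m => gaussianReal 0 v).real
        {w | ε ≤ |((r • (Yᵀ * Y))⁻¹ *ᵥ (r • (Yᵀ *ᵥ w))) i|}
      ≤ 2 * exp (-ε ^ 2 / (2 * (v * r * B))) := by
  simp only [mulVec_smul_transpose_mulVec_apply]
  refine measureReal_abs_dotProduct_ge_le v _ hε ?_
  rw [dotProduct_self_smul_mulVec_row (nonsing_inv_mul _ hdet), mul_assoc]
  gcongr

end GramMatrix

lemma measure_exists_mem_le_ofReal_card_mul {Ω ι : Type*} [MeasurableSpace Ω]
    (μ : Measure Ω) [IsFiniteMeasure μ] (s : Finset ι) (P : ι → Ω → Prop) {δ : ℝ}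
    (h : ∀ i ∈ s, μ.real {ω | P i ω} ≤ δ) :
    μ {ω | ∃ i ∈ s, P i ω} ≤ ENNReal.ofReal (s.card * δ) := by
  have hunion : {ω | ∃ i ∈ s, P i ω} = ⋃ i ∈ s, {ω | P i ω} := by ext; simp
  rw [← ofReal_measureReal, hunion]
  refine ENNReal.ofReal_le_ofReal ((measureReal_biUnion_finset_le s _).trans ?_)
  simpa using Finset.sum_le_card_nsmul s _ δ h

section Restriction

variable {n p : ℕ} (X : Matrix (Fin n) (Fin p) ℝ) (r : ℝ) (T : Finset (Fin p))

lemma subM_smul_transpose_mul_self :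
    subM (r • (Xᵀ * X)) T T
      = r • ((X.submatrix id Subtype.val)ᵀ * X.submatrix id Subtype.val) := by
  rw [subM, submatrix_smul, transpose_submatrix, ← submatrix_mul _ _ _ _ _ Function.bijective_id]
  rfl

lemma restrv_smul_transpose_mulVec (w : Fin n → ℝ) :
    restrv (r • (Xᵀ *ᵥ w)) T = r • ((X.submatrix id Subtype.val)ᵀ *ᵥ w) := by
  ext i
  simp [restrv, mulVec, dotProduct]

end Restriction

lemma extendT_of_mem {p : ℕ} (T : Finset (Fin p)) (g : ↥T → ℝ) {i : Fin p} (hi : i ∈ T) :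
    extendT T g i = g ⟨i, hi⟩ :=
  dif_pos hi

/-- Lemma 5 of the paper.  For a deterministic design with
`Σ̂ = XᵀX/n`, `T0` with `Σ̂_{T0,T0}` invertible, and `W ∼ N(0,σ²Iₙ)`, `r̂ = XᵀW/n`:
`P(‖Σ̂_{T0,T0}^{-1} r̂_{T0}‖_∞ ≥ σ√(2c1 log p/n)·‖Σ̂_{T0,T0}^{-1}‖₂^{1/2}) ≤ 2p^{1−c1}`.
The operator norm of the symmetric matrix `Σ̂_{T0,T0}^{-1}` is formalized by the
quadratic-form upper bound `B` (the least such `B` is exactly the operator norm). -/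
theorem stmt7
    (n p : ℕ) (hn : 0 < n)
    (sigma : ℝ) (hsigma : 0 < sigma)
    (X : Matrix (Fin n) (Fin p) ℝ)
    (Sig : Matrix (Fin p) (Fin p) ℝ) (hSigDef : Sig = (1 / (n : ℝ)) • (Xᵀ * X))
    (T0 : Finset (Fin p))
    (hinv : IsUnit (subM Sig T0 T0).det)
    -- `B` is the operator norm `‖Σ̂_{T0,T0}^{-1}‖₂`
    (B : ℝ)
    (hB : ∀ u : ↥T0 → ℝ, u ⬝ᵥ ((subM Sig T0 T0)⁻¹ *ᵥ u) ≤ B * (∑ i, (u i)^2))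
    (c1 : ℝ) (hc1 : 1 < c1) :
    (Measure.pi fun _ : Fin n => gaussianReal 0 (Real.toNNReal (sigma ^ 2)))
      {w | ∃ i ∈ T0,
        sigma * Real.sqrt (2 * c1 * Real.log p / n) * Real.sqrt B ≤
          |extendT T0 ((subM Sig T0 T0)⁻¹ *ᵥ
            restrv ((1 / (n : ℝ)) • (Xᵀ *ᵥ w)) T0) i|}
      ≤ ENNReal.ofReal (2 * (p : ℝ) ^ (1 - c1)) := by
  set Xs : Matrix (Fin n) ↥T0 ℝ := X.submatrix id Subtype.val
  have hS : subM Sig T0 T0 = (1 / (n : ℝ)) • (Xsᵀ * Xs) :=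
    hSigDef ▸ subM_smul_transpose_mul_self X _ T0
  rw [hS] at hinv hB ⊢
  refine (measure_exists_mem_le_ofReal_card_mul _ T0 _ (δ := 2 * (p : ℝ) ^ (-c1))
    fun i hi => ?_).trans (ENNReal.ofReal_le_ofReal ?_)
  · set j : ↥T0 := ⟨i, hi⟩
    have hdiag := diag_inv_smul_transpose_mul_self_pos (by positivity) hinv j
    have hdiagB := diag_le_of_forall_dotProduct_mulVec_le hB j
    have hB0 : 0 < B := hdiag.trans_le hdiagB
    have hp : (0 : ℝ) < p := by exact_mod_cast i.pos
    simp only [extendT_of_mem T0 _ hi, restrv_smul_transpose_mulVec]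
    refine (measureReal_abs_inv_smul_transpose_mul_self_mulVec_ge_le _ (by positivity) hinv j
      (by positivity) hdiagB).trans_eq ?_
    rw [Real.coe_toNNReal _ (sq_nonneg _), mul_pow, mul_pow, sq_sqrt (by positivity),
      sq_sqrt hB0.le, rpow_def_of_pos hp]
    congr 1
    field_simp
  · calc (T0.card : ℝ) * (2 * (p : ℝ) ^ (-c1)) ≤ p * (2 * (p : ℝ) ^ (-c1)) := by
          gcongr; simpa using T0.card_le_univ
      _ = 2 * (p : ℝ) ^ (1 - c1) := by
          rw [sub_eq_add_neg, rpow_add' p.cast_nonneg (by linarith), rpow_one]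
          ring
end
end

section
/- (Confounding-variable example.) Fix s0 ≥ 1, p > s0, and a ∈ [1/s0, 1/√s0). Let S = {1,…,s0}, let u_S ∈ ℝ^p be the indicator vector of S, let e_p be the p-th standard basis vector, and let Σ = I_{p×p} + a(e_p u_Sᵀ + u_S e_pᵀ); Σ is positive definite with minimum eigenvalue 1 − a√s0. Let θ0 ∈ ℝ^p be supported on S with θ0_i > 0 for all i ∈ S and θ_min = min_{i∈S} θ0_i. Then: (1) the standard irrepresentability quantity satisfies ‖Σ_{S^c,S} Σ_{S,S}^{-1} sign(θ0_S)‖_∞ = a·s0 ≥ 1, so irrepresentability fails in the strict sense; (2) for every ξ ∈ (0, ξ*) with ξ* = min(1, (1−a²s0)/(1−a))·θ_min, the unique population-level estimator θ̂∞(ξ) satisfies θ̂∞_p(ξ) = ((a·s0 − 1)/(1 − a²s0))·ξ, θ̂∞_S(ξ) = θ0_S − (a·θ̂∞_p(ξ) + ξ)·u_S restricted to S, and θ̂∞_i(ξ) = 0 for i ∉ S ∪ {p}; in particular T0 = S ∪ {p} when a > 1/s0, and the generalized irrepresentability quantity satisfies ‖Σ_{T0^c,T0} Σ_{T0,T0}^{-1}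 v0_{T0}‖_∞ = 0, where v0_{T0} is the all-ones vector on T0. -/
open Matrix Finset MeasureTheory ProbabilityTheory
noncomputable section

/-!
With `e = e_q` and `u = u_S` (`q ∉ S`), `⟨v, Σ v⟩ = ‖v‖² + 2a v_q ∑_{i∈S} v_i`, and Cauchy–Schwarz
bounds the cross term by `a√s0 ‖v‖²`, with equality at `u_S − √s0 e_q`. Since `Σ_{S,S} = I`, the
irrepresentability vector is `Σ u_S = u_S + a s0 e_q`. For the Lasso, the vector equal to
`θ0 − c` on `S`, to `b` at `q` and to `0` elsewhere has gradient `Σ(θ − θ0) = −ξ(u_S + e_q)`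
exactly when `b(1 − a²s0) = (a s0 − 1)ξ` and `c = ab + ξ`; for `ξ < ξ*` its signs match,
so it satisfies the KKT conditions, and strong convexity makes it the unique minimiser.
-/

section ZeroNoiseLasso

variable {p : ℕ} {A : Matrix (Fin p) (Fin p) ℝ} {th0 : Fin p → ℝ} {xi : ℝ}

lemma dotProduct_mulVec_comm_of_isSymm (hA : A.IsSymm) (u v : Fin p → ℝ) :
    u ⬝ᵥ A *ᵥ v = v ⬝ᵥ A *ᵥ u := by
  rw [dotProduct_mulVec, ← mulVec_transpose, hA.eq, dotProduct_comm]

lemma znObj_eq_add (hA : A.IsSymm) (ths th : Fin p → ℝ) :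
    znObj A th0 xi th = znObj A th0 xi ths + (1 / 2) * ((th - ths) ⬝ᵥ A *ᵥ (th - ths))
      + (A *ᵥ (ths - th0)) ⬝ᵥ (th - ths) + xi * (l1n th - l1n ths) := by
  have hsplit : th - th0 = (ths - th0) + (th - ths) := by abel
  have hcross : (ths - th0) ⬝ᵥ A *ᵥ (th - ths) = (A *ᵥ (ths - th0)) ⬝ᵥ (th - ths) := by
    rw [dotProduct_mulVec_comm_of_isSymm hA, dotProduct_comm]
  simp only [znObj, hsplit, mulVec_add, dotProduct_add, add_dotProduct, hcross,
    dotProduct_mulVec_comm_of_isSymm hA (th - ths) (ths - th0)]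
  ring

/-- Sufficiency of the KKT conditions, with the quadratic gap that yields uniqueness. -/
lemma znObj_add_half_le (hA : A.IsSymm) {ths : Fin p → ℝ}
    (hbound : ∀ i, |(A *ᵥ (ths - th0)) i| ≤ xi)
    (hcompl : ∀ i, (A *ᵥ (ths - th0)) i * ths i = -(xi * |ths i|)) (th : Fin p → ℝ) :
    znObj A th0 xi ths + (1 / 2) * ((th - ths) ⬝ᵥ A *ᵥ (th - ths)) ≤ znObj A th0 xi th := by
  set g := A *ᵥ (ths - th0)
  have hlin : 0 ≤ g ⬝ᵥ (th - ths) + xi * (l1n th - l1n ths) := by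
    have hsum : g ⬝ᵥ (th - ths) + xi * (l1n th - l1n ths)
        = ∑ i, (g i * th i + xi * |th i|) := by
      simp only [dotProduct, l1n, Pi.sub_apply, mul_sub, Finset.mul_sum, hcompl,
        ← Finset.sum_sub_distrib, ← Finset.sum_add_distrib]
      exact Finset.sum_congr rfl fun i _ => by ring
    rw [hsum]
    refine Finset.sum_nonneg fun i _ => ?_
    have : |g i| * |th i| ≤ xi * |th i| := mul_le_mul_of_nonneg_right (hbound i) (abs_nonneg _)
    nlinarith [neg_abs_le (g i * th i), abs_mul (g i) (th i)]
  linarith [znObj_eq_add (th0 := th0) (xi := xi) hA ths th]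

lemma eq_of_forall_znObj_le (hA : A.PosDef) {ths : Fin p → ℝ}
    (hbound : ∀ i, |(A *ᵥ (ths - th0)) i| ≤ xi)
    (hcompl : ∀ i, (A *ᵥ (ths - th0)) i * ths i = -(xi * |ths i|)) {th : Fin p → ℝ}
    (hmin : ∀ t, znObj A th0 xi th ≤ znObj A th0 xi t) : th = ths := by
  by_contra hne
  have hpos := hA.dotProduct_mulVec_pos (sub_ne_zero.mpr hne)
  rw [star_trivial] at hpos
  linarith [znObj_add_half_le (isHermitian_iff_isSymm.mp hA.isHermitian) hbound hcompl th,
    hmin ths]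

end ZeroNoiseLasso

lemma extendT_restrv_sgnv_of_pos {p : ℕ} {S : Finset (Fin p)} {th0 : Fin p → ℝ}
    (hpos : ∀ i ∈ S, 0 < th0 i) :
    extendT S (restrv (sgnv th0) S) = fun i => if i ∈ S then 1 else 0 := by
  ext i
  by_cases hi : i ∈ S
  · simp [extendT, restrv, sgnv, hi, Real.sign_of_pos (hpos i hi)]
  · simp [extendT, hi]

section ConfoundedCov

variable {p : ℕ} (S : Finset (Fin p)) (q : Fin p) (a : ℝ)

/-- `I + a (e_q u_Sᵀ + u_S e_qᵀ)`, with `u_S` the indicator vector of `S`. -/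
def confoundedCov : Matrix (Fin p) (Fin p) ℝ :=
  1 + a • Matrix.of fun i j =>
    (if i = q then 1 else 0) * (if j ∈ S then 1 else 0) +
      (if i ∈ S then 1 else 0) * (if j = q then 1 else 0)

lemma confoundedCov_isSymm : (confoundedCov S q a).IsSymm := by
  refine Matrix.isSymm_one.add (Matrix.IsSymm.smul ?_ a)
  ext i j
  simp only [transpose_apply, of_apply]
  ring

lemma confoundedCov_mulVec_apply (v : Fin p → ℝ) (j : Fin p) :
    (confoundedCov S q a *ᵥ v) j =
      v j + a * ((if j = q then ∑ i ∈ S, v i else 0) + (if j ∈ S then v q else 0)) := by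
  rw [confoundedCov, add_mulVec, one_mulVec, smul_mulVec, Pi.add_apply, Pi.smul_apply,
    smul_eq_mul]
  congr 2
  simp only [mulVec, dotProduct, of_apply, add_mul, Finset.sum_add_distrib, ite_mul, one_mul,
    zero_mul]
  split_ifs <;> simp

lemma dotProduct_confoundedCov_mulVec (v : Fin p → ℝ) :
    v ⬝ᵥ confoundedCov S q a *ᵥ v = ∑ i, v i ^ 2 + 2 * a * v q * ∑ i ∈ S, v i := by
  simp only [dotProduct, confoundedCov_mulVec_apply, mul_add, Finset.sum_add_distrib, mul_ite,
    mul_zero, Finset.sum_ite_mem, Finset.univ_inter, Finset.sum_ite_eq', Finset.mem_univ, if_true,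
    ← Finset.sum_mul, sq]
  ring

variable {S q}

lemma mul_sum_sq_le_dotProduct_confoundedCov_mulVec (hq : q ∉ S) (ha : 0 ≤ a)
    (v : Fin p → ℝ) :
    (1 - a * √(#S : ℝ)) * ∑ i, v i ^ 2 ≤ v ⬝ᵥ confoundedCov S q a *ᵥ v := by
  rw [dotProduct_confoundedCov_mulVec]
  set s := √(#S : ℝ)
  set x := v q
  set y := ∑ i ∈ S, v i
  set Q := ∑ i ∈ S, v i ^ 2
  have hQ : Q + x ^ 2 ≤ ∑ i, v i ^ 2 := by
    have := Finset.sum_le_sum_of_subset_of_nonneg (Finset.subset_univ (insert q S))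
      fun i _ _ => sq_nonneg (v i)
    rwa [Finset.sum_insert hq, add_comm] at this
  have hCS : y ^ 2 ≤ s ^ 2 * Q := by
    rw [Real.sq_sqrt (Nat.cast_nonneg _)]
    exact sq_sum_le_card_mul_sum_sq
  -- `2|xy| ≤ s(x² + Q)`, from `(s x + y)² ≥ 0` and Cauchy–Schwarz `y² ≤ s² Q`
  have hcross : 0 ≤ s * (x ^ 2 + Q) + 2 * x * y := by
    rcases (show 0 ≤ s from Real.sqrt_nonneg _).eq_or_lt with hs | hs
    · have hy : y = 0 := by rw [← hs] at hCS; nlinarith [sq_nonneg y]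
      simp [← hs, hy]
    · refine nonneg_of_mul_nonneg_right ?_ hs
      nlinarith [sq_nonneg (s * x + y)]
  nlinarith [mul_nonneg ha hcross,
    mul_nonneg (mul_nonneg ha (Real.sqrt_nonneg (#S : ℝ))) (sub_nonneg.mpr hQ)]

lemma exists_dotProduct_confoundedCov_mulVec_eq (hq : q ∉ S) (hS : S.Nonempty) :
    ∃ w : Fin p → ℝ, w ≠ 0 ∧
      w ⬝ᵥ confoundedCov S q a *ᵥ w = (1 - a * √(#S : ℝ)) * ∑ i, w i ^ 2 := by
  set s := √(#S : ℝ)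
  have hs : s ^ 2 = #S := Real.sq_sqrt (Nat.cast_nonneg _)
  refine ⟨fun i => if i ∈ S then 1 else if i = q then -s else 0, ?_, ?_⟩
  · obtain ⟨i, hi⟩ := hS
    exact Function.ne_iff.mpr ⟨i, by simp [hi]⟩
  · have hsq : ∑ i, (if i ∈ S then 1 else if i = q then -s else 0 : ℝ) ^ 2 = 2 * #S := by
      simp [ite_pow, Finset.sum_ite, hs, hq]
      ring
    rw [dotProduct_confoundedCov_mulVec, hsq]
    simp +contextual [hq]
    ring

lemma confoundedCov_posDef (hq : q ∉ S) (ha : 0 ≤ a) (has : a * √(#S : ℝ) < 1) :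
    (confoundedCov S q a).PosDef := by
  refine .of_dotProduct_mulVec_pos (isHermitian_iff_isSymm.mpr (confoundedCov_isSymm S q a))
    fun v hv => ?_
  obtain ⟨i, hi⟩ := Function.ne_iff.mp hv
  have hsum : 0 < ∑ j, v j ^ 2 :=
    lt_of_lt_of_le (sq_pos_of_ne_zero hi) (Finset.single_le_sum (fun j _ => sq_nonneg (v j))
      (Finset.mem_univ i))
  rw [star_trivial]
  exact lt_of_lt_of_le (mul_pos (sub_pos.mpr has) hsum)
    (mul_sum_sq_le_dotProduct_confoundedCov_mulVec a hq ha v)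

lemma subM_confoundedCov_self (hq : q ∉ S) : subM (confoundedCov S q a) S S = 1 := by
  ext ⟨i, hi⟩ ⟨j, hj⟩
  have hiq : i ≠ q := ne_of_mem_of_not_mem hi hq
  have hjq : j ≠ q := ne_of_mem_of_not_mem hj hq
  simp [subM, confoundedCov, one_apply, hiq, hjq]

lemma confoundedCov_irrepresentability_apply {th0 : Fin p → ℝ} (hq : q ∉ S)
    (hpos : ∀ i ∈ S, 0 < th0 i) {j : Fin p} (hj : j ∉ S) :
    (confoundedCov S q a *ᵥ
        extendT S ((subM (confoundedCov S q a) S S)⁻¹ *ᵥ restrv (sgnv th0) S)) j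
      = if j = q then a * #S else 0 := by
  rw [subM_confoundedCov_self a hq, inv_one, one_mulVec, extendT_restrv_sgnv_of_pos hpos]
  simp [confoundedCov_mulVec_apply, hj]

lemma confoundedCov_mulVec_extendT_apply {T : Finset (Fin p)} (hST : S ⊆ T) (hqT : q ∈ T)
    (f : T → ℝ) {j : Fin p} (hj : j ∉ T) : (confoundedCov S q a *ᵥ extendT T f) j = 0 := by
  have hjq : j ≠ q := fun h => hj (h ▸ hqT)
  have hjS : j ∉ S := fun h => hj (hST h)
  simp [confoundedCov_mulVec_apply, extendT, hj, hjq, hjS]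

end ConfoundedCov

def confoundedSlope (a s : ℝ) : ℝ := (a * s - 1) / (1 - a ^ 2 * s)

section ConfoundedSlope

variable {a s : ℝ}

lemma confoundedSlope_mul_mul (has : a ^ 2 * s < 1) (xi : ℝ) :
    confoundedSlope a s * xi * (1 - a ^ 2 * s) = (a * s - 1) * xi := by
  rw [confoundedSlope]
  field_simp [(sub_pos.mpr has).ne']

lemma confoundedSlope_nonneg (has0 : 1 ≤ a * s) (has : a ^ 2 * s < 1) : 0 ≤ confoundedSlope a s :=
  div_nonneg (sub_nonneg.mpr has0) (sub_pos.mpr has).le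

lemma confoundedSlope_pos (has0 : 1 < a * s) (has : a ^ 2 * s < 1) : 0 < confoundedSlope a s :=
  div_pos (sub_pos.mpr has0) (sub_pos.mpr has)

lemma mul_confoundedSlope_mul_add_lt (hs : 1 ≤ s) (has : a ^ 2 * s < 1)
    {xi t : ℝ} (ht : 0 < t) (hxi : xi < min 1 ((1 - a ^ 2 * s) / (1 - a)) * t) :
    a * (confoundedSlope a s * xi) + xi < t := by
  have ha1 : a < 1 := by nlinarith
  have hxi' : xi * (1 - a) < (1 - a ^ 2 * s) * t := by
    have := hxi.trans_le (mul_le_mul_of_nonneg_right (min_le_right _ _) ht.le)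
    rwa [div_mul_eq_mul_div, lt_div_iff₀ (sub_pos.mpr ha1)] at this
  -- `(a b + ξ)(1 − a²s) = ξ(1 − a)` for `b = confoundedSlope a s * ξ`
  nlinarith [confoundedSlope_mul_mul has xi]

end ConfoundedSlope

section ConfoundedLasso

variable {p : ℕ} {S : Finset (Fin p)} {q : Fin p} {a : ℝ} {th0 : Fin p → ℝ}

variable (S q) in
def confoundedLassoSol (th0 : Fin p → ℝ) (b c : ℝ) : Fin p → ℝ :=
  fun i => if i ∈ S then th0 i - c else if i = q then b else 0

lemma confoundedCov_mulVec_confoundedLassoSol_sub_apply (hq : q ∉ S)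
    (hth0 : ∀ i ∉ S, th0 i = 0) {b xi : ℝ} (hb : b * (1 - a ^ 2 * #S) = (a * #S - 1) * xi)
    (j : Fin p) :
    (confoundedCov S q a *ᵥ (confoundedLassoSol S q th0 b (a * b + xi) - th0)) j
      = if j ∈ S ∨ j = q then -xi else 0 := by
  have hdiff : confoundedLassoSol S q th0 b (a * b + xi) - th0
      = fun i => if i ∈ S then -(a * b + xi) else if i = q then b else 0 := by
    ext i
    by_cases hi : i ∈ S
    · simp [confoundedLassoSol, hi]
    · simp [confoundedLassoSol, hi, hth0 i hi]
  rw [hdiff, confoundedCov_mulVec_apply]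
  by_cases hjS : j ∈ S
  · have hjq : j ≠ q := ne_of_mem_of_not_mem hjS hq
    simp [hjS, hjq, hq]
  · by_cases hjq : j = q
    · subst hjq
      simp +contextual [hjS]
      linear_combination hb
    · simp [hjS, hjq]

theorem eq_confoundedLassoSol_of_forall_znObj_le (hq : q ∉ S) (hth0 : ∀ i ∉ S, th0 i = 0)
    (ha : 0 ≤ a) (has : a * √(#S : ℝ) < 1) {b xi : ℝ}
    (hb : b * (1 - a ^ 2 * #S) = (a * #S - 1) * xi) (hxi : 0 ≤ xi) (hb0 : 0 ≤ b)
    (hc : ∀ i ∈ S, a * b + xi ≤ th0 i) {th : Fin p → ℝ}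
    (hmin : ∀ t, znObj (confoundedCov S q a) th0 xi th ≤ znObj (confoundedCov S q a) th0 xi t) :
    th = confoundedLassoSol S q th0 b (a * b + xi) := by
  have hgrad := confoundedCov_mulVec_confoundedLassoSol_sub_apply hq hth0 hb
  refine eq_of_forall_znObj_le (confoundedCov_posDef a hq ha has) (fun i => ?_) (fun i => ?_) hmin
  · rw [hgrad]
    split_ifs <;> simp [abs_of_nonneg hxi, hxi]
  · rw [hgrad]
    by_cases hiS : i ∈ S
    · simp [confoundedLassoSol, hiS, abs_of_nonneg (sub_nonneg.mpr (hc i hiS))]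
    · by_cases hiq : i = q
      · simp [confoundedLassoSol, hiq, hq, abs_of_nonneg hb0]
      · simp [confoundedLassoSol, hiS, hiq]

lemma suppv_confoundedLassoSol {b c : ℝ} (hq : q ∉ S) (hb : 0 < b) (hc : ∀ i ∈ S, c < th0 i) :
    suppv (confoundedLassoSol S q th0 b c) = insert q S := by
  ext i
  rw [suppv, Finset.mem_filter_univ, Finset.mem_insert, confoundedLassoSol]
  by_cases hiS : i ∈ S
  · simp [hiS, (sub_pos.mpr (hc i hiS)).ne']
  · by_cases hiq : i = q
    · simp [hiq, hq, hb.ne']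
    · simp [hiS, hiq]

theorem confoundedCov_lasso_spec (hq : q ∉ S) (hth0 : ∀ i ∉ S, th0 i = 0)
    (hpos : ∀ i ∈ S, 0 < th0 i) (ha : 0 < a) (has0 : 1 ≤ a * #S) (hasq : a * √(#S : ℝ) < 1)
    {xi : ℝ} (hxi : 0 < xi) (hxib : ∀ i ∈ S, xi < min 1 ((1 - a ^ 2 * #S) / (1 - a)) * th0 i)
    {th : Fin p → ℝ}
    (hmin : ∀ t, znObj (confoundedCov S q a) th0 xi th ≤ znObj (confoundedCov S q a) th0 xi t) :
    th q = confoundedSlope a #S * xi ∧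
      (∀ i ∈ S, th i = th0 i - (a * (confoundedSlope a #S * xi) + xi)) ∧
      (∀ i ∉ S, i ≠ q → th i = 0) ∧
      (1 < a * #S → suppv th = insert q S) := by
  have ha2s : a ^ 2 * #S < 1 := by
    nlinarith [Real.sq_sqrt (Nat.cast_nonneg (α := ℝ) #S), Real.sqrt_nonneg (#S : ℝ)]
  have hc : ∀ i ∈ S, a * (confoundedSlope a #S * xi) + xi < th0 i := fun i hi =>
    mul_confoundedSlope_mul_add_lt (by exact_mod_cast Finset.card_pos.mpr ⟨i, hi⟩) ha2s
      (hpos i hi) (hxib i hi)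
  rw [eq_confoundedLassoSol_of_forall_znObj_le hq hth0 ha.le hasq
    (confoundedSlope_mul_mul ha2s xi) hxi.le
    (mul_nonneg (confoundedSlope_nonneg has0 ha2s) hxi.le) (fun i hi => (hc i hi).le) hmin]
  refine ⟨by simp [confoundedLassoSol, hq], fun i hi => by simp [confoundedLassoSol, hi],
    fun i hiS hiq => by simp [confoundedLassoSol, hiS, hiq], fun has0' => ?_⟩
  exact suppv_confoundedLassoSol hq (mul_pos (confoundedSlope_pos has0' ha2s) hxi) hc

end ConfoundedLasso

/-- the confounding-variable example, Appendix B of the paper.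
For `Σ = I + a(e_p u_Sᵀ + u_S e_pᵀ)` with `S = {1,…,s0}` and `a ∈ [1/s0, 1/√s0)`:
`Σ` is positive definite with minimum eigenvalue `1 − a√s0`; the standard
irrepresentability quantity equals `a·s0 ≥ 1` (so irrepresentability fails in the strict
sense); and for every `ξ ∈ (0,ξ*)`, with `ξ* = min(1,(1−a²s0)/(1−a))·θ_min`, the
population-level estimator satisfies `θ̂∞_p(ξ) = ((a·s0−1)/(1−a²s0))·ξ`,
`θ̂∞_S(ξ) = θ0_S − (a·θ̂∞_p(ξ) + ξ)·1_S`, and `θ̂∞_i(ξ) = 0` for `i ∉ S ∪ {p}`; in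
particular `T0 = S ∪ {p}` when `a > 1/s0`, and then the generalized irrepresentability
quantity `‖Σ_{T0ᶜ,T0}Σ_{T0,T0}^{-1}v0_{T0}‖_∞` vanishes (`v0_{T0}` the all-ones vector). -/
theorem stmt18
    (p s0 : ℕ) (hs0 : 1 ≤ s0) (hp : s0 < p)
    (a : ℝ) (ha1 : 1 / (s0 : ℝ) ≤ a) (ha2 : a < 1 / Real.sqrt s0)
    (S : Finset (Fin p)) (hS : S = Finset.univ.filter fun i : Fin p => (i : ℕ) < s0)
    (uS : Fin p → ℝ) (huS : uS = fun i : Fin p => if (i : ℕ) < s0 then (1 : ℝ) else 0)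
    (eP : Fin p → ℝ) (heP : eP = fun i : Fin p => if (i : ℕ) = p - 1 then (1 : ℝ) else 0)
    (Sig : Matrix (Fin p) (Fin p) ℝ)
    (hSigDef : Sig = 1 + a • Matrix.of (fun i j => eP i * uS j + uS i * eP j))
    (th0 : Fin p → ℝ) (hsupp : suppv th0 = S) (hpos : ∀ i ∈ S, 0 < th0 i)
    (T0 : Finset (Fin p))
    (hT0 : T0 = S ∪ (Finset.univ.filter fun i : Fin p => (i : ℕ) = p - 1))
    -- the (unique) population-level estimator
    (thinf : ℝ → (Fin p → ℝ))
    (hmin : ∀ xi, 0 < xi → ∀ th, znObj Sig th0 xi (thinf xi) ≤ znObj Sig th0 xi th) :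
    -- Σ is positive definite with minimum eigenvalue 1 − a√s0
    (Sig.PosDef ∧
      (∀ u : Fin p → ℝ,
        (1 - a * Real.sqrt s0) * (∑ i, (u i) ^ 2) ≤ u ⬝ᵥ (Sig *ᵥ u)) ∧
      (∃ u : Fin p → ℝ, u ≠ 0 ∧
        u ⬝ᵥ (Sig *ᵥ u) = (1 - a * Real.sqrt s0) * (∑ i, (u i) ^ 2))) ∧
    -- (1) the standard irrepresentability quantity equals a·s0 ≥ 1
    ((∀ j, j ∉ S →
        |(Sig *ᵥ extendT S ((subM Sig S S)⁻¹ *ᵥ restrv (sgnv th0) S)) j| ≤ a * s0) ∧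
      (∃ j, j ∉ S ∧
        |(Sig *ᵥ extendT S ((subM Sig S S)⁻¹ *ᵥ restrv (sgnv th0) S)) j| = a * s0) ∧
      1 ≤ a * s0) ∧
    -- (2) the population-level estimator for ξ ∈ (0, ξ*)
    (∀ xi : ℝ, 0 < xi →
      (∀ i ∈ S, xi < min 1 ((1 - a ^ 2 * s0) / (1 - a)) * th0 i) →
      ((∀ i : Fin p, (i : ℕ) = p - 1 →
          thinf xi i = ((a * s0 - 1) / (1 - a ^ 2 * s0)) * xi) ∧
       (∀ i ∈ S,
          thinf xi i = th0 i - (a * (((a * s0 - 1) / (1 - a ^ 2 * s0)) * xi) + xi)) ∧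
       (∀ i : Fin p, i ∉ S → (i : ℕ) ≠ p - 1 → thinf xi i = 0) ∧
       (1 / (s0 : ℝ) < a → suppv (thinf xi) = T0) ∧
       (1 / (s0 : ℝ) < a → ∀ j, j ∉ T0 →
          (Sig *ᵥ extendT T0 ((subM Sig T0 T0)⁻¹ *ᵥ (fun _ : ↥T0 => (1 : ℝ)))) j = 0))) := by
  have hs0pos : (0 : ℝ) < s0 := by exact_mod_cast hs0
  have ha0 : 0 < a := (one_div_pos.mpr hs0pos).trans_le ha1
  have has0 : 1 ≤ a * s0 := by rwa [div_le_iff₀ hs0pos] at ha1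
  have hasq : a * √(s0 : ℝ) < 1 := (lt_div_iff₀ (Real.sqrt_pos.mpr hs0pos)).mp ha2
  set q : Fin p := ⟨p - 1, by omega⟩
  have hq : ∀ i : Fin p, (i : ℕ) = p - 1 ↔ i = q := fun i => by simp [q, Fin.ext_iff]
  have hqS : q ∉ S := by simp [hS, q]; omega
  have hcard : #S = s0 := by rw [hS, Fin.card_filter_val_lt, min_eq_right hp.le]
  have hSig : Sig = confoundedCov S q a := by
    subst hSigDef huS heP
    simp only [confoundedCov, hq, hS, Finset.mem_filter_univ]
  have hT0q : T0 = insert q S := by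
    ext i
    simp [hT0, hq, or_comm]
  have hth0 : ∀ i ∉ S, th0 i = 0 := fun i hi => by
    simpa [suppv] using (show i ∉ suppv th0 from hsupp ▸ hi)
  subst hSig hcard hT0q
  refine ⟨⟨confoundedCov_posDef a hqS ha0.le hasq,
    mul_sum_sq_le_dotProduct_confoundedCov_mulVec a hqS ha0.le,
    exists_dotProduct_confoundedCov_mulVec_eq a hqS (Finset.card_pos.mp hs0)⟩,
    ⟨fun j hj => ?_, ⟨q, hqS, ?_⟩, has0⟩, fun xi hxi hxib => ?_⟩
  · rw [confoundedCov_irrepresentability_apply a hqS hpos hj]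
    split_ifs <;> simp [abs_of_pos, ha0, hs0pos]
  · rw [confoundedCov_irrepresentability_apply a hqS hpos hqS]
    simp [abs_of_pos, ha0, hs0pos]
  obtain ⟨hthq, hthS, hth_zero, hsupp_th⟩ :=
    confoundedCov_lasso_spec hqS hth0 hpos ha0 has0 hasq hxi hxib (hmin xi hxi)
  refine ⟨fun i hi => ?_, fun i hi => ?_, fun i hiS hiq => hth_zero i hiS ((hq i).not.mp hiq),
    fun hgt => hsupp_th (by rwa [div_lt_iff₀ hs0pos] at hgt), fun _ j hj =>
      confoundedCov_mulVec_extendT_apply a (Finset.subset_insert q S) (Finset.mem_insert_self q S)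
        _ hj⟩
  · rw [(hq i).mp hi, hthq, confoundedSlope]
  · rw [hthS i hi, confoundedSlope]
end
end
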